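/- With V = B a quaternion algebra with form Q = α·ν, the map B× × B× → GO(V), (b₁,b₂) ↦ ρ(b₁,b₂) where ρ(b₁,b₂)x = b₁xb₂⁻¹, is a group homomorphism whose kernel is the set of pairs (t,t) with t in the center k× of B×. -/

import Mathlib

theorem Units.mul_mul_inv_eq_self_iff {M : Type*} [Monoid M] (a b : Mˣ) :
    (∀ x : M, a * x * ↑b⁻¹ = x) ↔ b = a ∧ ∀ x : M, a * x = x * a := by
  constructor
  · intro h
    have hba : b = a := (Units.ext (by simpa using h 1)).symm
    subst hba
    exact ⟨rfl, fun x => (Units.mul_inv_eq_iff_eq_mul b).mp (h x)⟩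
  · rintro ⟨rfl, hcomm⟩ x
    rw [hcomm, mul_assoc, Units.mul_inv, mul_one]

theorem exists_units_algebraMap_eq_of_units {k B : Type*} [Field k] [Ring B] [Algebra k B]
    (a : Bˣ) (t : k) (ht : (a : B) = algebraMap k B t) :
    ∃ u : kˣ, (a : B) = algebraMap k B u := by
  cases subsingleton_or_nontrivial B
  · exact ⟨1, Subsingleton.elim _ _⟩
  · have ht0 : t ≠ 0 := by
      rintro rfl
      exact a.ne_zero (by rw [ht, map_zero])
    exact ⟨Units.mk0 t ht0, ht⟩

theorem rho_hom_and_kernel_general (k B : Type*) [Field k] [Ring B] [Algebra k B]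
    (hcentral : ∀ z : B, (∀ x : B, z * x = x * z) → ∃ t : k, z = algebraMap k B t)
    (ν : B → k) (hν1 : ν 1 = 1) (hνmul : ∀ x y : B, ν (x * y) = ν x * ν y)
    (α : k)
    (ρ : Bˣ × Bˣ → B → B) (hρ : ∀ p x, ρ p x = (p.1 : B) * x * ((p.2⁻¹ : Bˣ) : B)) :
    (∀ p : Bˣ × Bˣ, ∃ c : k, c ≠ 0 ∧ ∀ x : B, α * ν (ρ p x) = c * (α * ν x)) ∧
    (∀ p q : Bˣ × Bˣ, ρ (p * q) = ρ p ∘ ρ q) ∧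
    (ρ 1 = id) ∧
    (∀ p : Bˣ × Bˣ, ρ p = id ↔
      ∃ t : kˣ, (p.1 : B) = algebraMap k B (t : k) ∧ p.2 = p.1) := by
  obtain rfl : ρ = fun p x => (p.1 : B) * x * ((p.2⁻¹ : Bˣ) : B) := funext fun p => funext (hρ p)
  let N : B →* k := ⟨⟨ν, hν1⟩, hνmul⟩
  have hNunit (u : Bˣ) : ν u ≠ 0 := (u.isUnit.map N).ne_zero
  refine ⟨fun p => ?_, fun p q => ?_, ?_, fun p => ?_⟩
  · refine ⟨ν p.1 * ν ↑p.2⁻¹, mul_ne_zero (hNunit _) (hNunit _), fun x => ?_⟩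
    rw [hνmul, hνmul]
    ring
  · funext x
    simp only [Function.comp_apply, Prod.fst_mul, Prod.snd_mul, mul_inv_rev, Units.val_mul,
      mul_assoc]
  · funext x
    simp
  · rw [funext_iff]
    simp only [id, Units.mul_mul_inv_eq_self_iff]
    constructor
    · rintro ⟨hpe, hcomm⟩
      obtain ⟨t, ht⟩ := hcentral _ hcomm
      obtain ⟨u, hu⟩ := exists_units_algebraMap_eq_of_units p.1 t ht
      exact ⟨u, hu, hpe⟩
    · rintro ⟨t, ht, hpe⟩
      exact ⟨hpe, fun x => by rw [ht]; exact Algebra.commutes _ x⟩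

/-- `(b₁,b₂) ↦ ρ(b₁,b₂)`, `ρ(b₁,b₂)x = b₁xb₂⁻¹`, is a group homomorphism
from `B× × B×` to `GO(V)` (it lands in the similitudes of `Q = α·ν`), and its kernel
is the set of pairs `(t,t)` with `t` a central scalar in `k×`.  Here `B` is a
quaternion algebra, in particular a central `k`-algebra. -/
theorem rho_hom_and_kernel (k B : Type*) [Field k] [Ring B] [Algebra k B]
    (hcentral : ∀ z : B, (∀ x : B, z * x = x * z) → ∃ t : k, z = algebraMap k B t)
    (ν : B → k) (hν1 : ν 1 = 1) (hνmul : ∀ x y : B, ν (x * y) = ν x * ν y)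
    (α : k) (hα : α ≠ 0)
    (ρ : Bˣ × Bˣ → B → B) (hρ : ∀ p x, ρ p x = (p.1 : B) * x * ((p.2⁻¹ : Bˣ) : B)) :
    (∀ p : Bˣ × Bˣ, ∃ c : k, c ≠ 0 ∧ ∀ x : B, α * ν (ρ p x) = c * (α * ν x)) ∧
    (∀ p q : Bˣ × Bˣ, ρ (p * q) = ρ p ∘ ρ q) ∧
    (ρ 1 = id) ∧
    (∀ p : Bˣ × Bˣ, ρ p = id ↔
      ∃ t : kˣ, (p.1 : B) = algebraMap k B (t : k) ∧ p.2 = p.1) :=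
  rho_hom_and_kernel_general k B hcentral ν hν1 hνmul α ρ hρ
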